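/- Let m ≥ 1 be an integer, let 0 < x_1 < x_2 < ... < x_m be real numbers, and let β_1, ..., β_m be purely imaginary complex numbers. For j = 1,...,m define d^{(1)}_{1,x_j} := (ω − 5) β_j / (6 (ω − 1) x_j) + Σ_{k=1, k≠j}^m 2 (ω − 1) x_k^{2/3} β_k / ( 3 x_j^{1/3} (x_j^{2/3} − x_k^{2/3}) (x_j^{2/3} − ω x_k^{2/3}) ), where ω = e^{2πi/3}. Then Σ_{j=1}^m 2 i β_j x_j · Im( d^{(1)}_{1,x_j} ) = Σ_{j=1}^m β_j², where Im denotes the imaginary part (a real number, viewed as a complex number in the identity). -/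

import Mathlib

/-!
Write `β_j = i b_j` with `b_j` real and `u_j = x_j^{2/3}`. Since `ω = -1/2 + (√3/2) i`,
`x_j Im d_j = b_j / 2 - ∑_{k ≠ j} b_k K(u_j, u_k)` with `K(u, v) = u v (u + v) / (u³ - v³)`.
The kernel `K` is antisymmetric, so the cross terms `b_j b_k K(u_j, u_k)` cancel in pairs in
`∑_j 2 i β_j x_j Im d_j = -2 ∑_j b_j x_j Im d_j`, leaving `-∑_j b_j² = ∑_j β_j²`.
-/

open Real Complex Finset

noncomputable section

/-- `ω = e^{2πi/3}`. -/
def pOmega : ℂ := Complex.exp (2 * Real.pi * Complex.I / 3)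

/-- The coefficient `d^{(1)}_{1,x_j}` from Subsection 4.3.2. -/
def pD1 {m : ℕ} (x : Fin m → ℝ) (β : Fin m → ℂ) (j : Fin m) : ℂ :=
  (pOmega - 5) * β j / (6 * (pOmega - 1) * x j)
    + ∑ k ∈ Finset.univ.filter (fun k => k ≠ j),
        2 * (pOmega - 1) * (x k ^ ((2 : ℝ) / 3) : ℝ) * β k
          / (3 * (x j ^ ((1 : ℝ) / 3) : ℝ)
              * (((x j ^ ((2 : ℝ) / 3) : ℝ) : ℂ) - ((x k ^ ((2 : ℝ) / 3) : ℝ) : ℂ))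
              * (((x j ^ ((2 : ℝ) / 3) : ℝ) : ℂ) - pOmega * ((x k ^ ((2 : ℝ) / 3) : ℝ) : ℂ)))

lemma sum_sum_filter_ne_eq_zero_of_antisymm {ι G : Type*} [Fintype ι] [DecidableEq ι]
    [AddCommGroup G] [IsAddTorsionFree G] (f : ι → ι → G) (hf : ∀ j k, f k j = -f j k) :
    ∑ j, ∑ k ∈ univ.filter (· ≠ j), f j k = 0 := by
  have hdiag (j : ι) : f j j = 0 := self_eq_neg.mp (hf j j)
  have hfull (j : ι) : ∑ k ∈ univ.filter (· ≠ j), f j k = ∑ k, f j k :=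
    sum_filter_of_ne fun k _ hk => by rintro rfl; exact hk (hdiag k)
  simp only [hfull]
  rw [← self_eq_neg]
  calc ∑ j, ∑ k, f j k = ∑ k, ∑ j, f j k := sum_comm
    _ = ∑ k, ∑ j, -f k j := sum_congr rfl fun k _ => sum_congr rfl fun j _ => hf k j
    _ = -∑ j, ∑ k, f j k := by simp only [sum_neg_distrib]

lemma pOmega_eq_exp_mul_I : pOmega = exp ((π - π / 3 : ℝ) * I) := by
  rw [pOmega]; push_cast; ring_nf

lemma pOmega_re : pOmega.re = -(1 / 2) := by
  rw [pOmega_eq_exp_mul_I, exp_ofReal_mul_I_re, Real.cos_pi_sub, Real.cos_pi_div_three]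

lemma pOmega_im : pOmega.im = √3 / 2 := by
  rw [pOmega_eq_exp_mul_I, exp_ofReal_mul_I_im, Real.sin_pi_sub, Real.sin_pi_div_three]

lemma re_pOmega_sub_five_div : ((pOmega - 5) / (pOmega - 1)).re = 3 := by
  have h3 : √3 * √3 = 3 := Real.mul_self_sqrt (by norm_num)
  have hN : normSq (pOmega - 1) = 3 := by
    simp only [normSq_apply, sub_re, pOmega_re, one_div, one_re, sub_im, pOmega_im, one_im,
      sub_zero]
    linear_combination h3 / 4
  rw [div_re, hN]
  simp only [sub_re, pOmega_re, one_div, re_ofNat, one_re, sub_im, pOmega_im, im_ofNat, sub_zero,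
    one_im]
  linear_combination h3 / 12

lemma re_pOmega_sub_one_div (u v : ℝ) :
    ((pOmega - 1) / (u - pOmega * v)).re = -3 / 2 * (u + v) / (u ^ 2 + u * v + v ^ 2) := by
  have h3 : √3 * √3 = 3 := Real.mul_self_sqrt (by norm_num)
  have hN : normSq (u - pOmega * v) = u ^ 2 + u * v + v ^ 2 := by
    simp only [normSq_apply, sub_re, ofReal_re, mul_re, pOmega_re, one_div, neg_mul, pOmega_im,
      ofReal_im, mul_zero, sub_zero, sub_neg_eq_add, sub_im, mul_im, zero_add, zero_sub, mul_neg,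
      neg_neg]
    linear_combination (v ^ 2 / 4) * h3
  rw [div_re, hN, ← add_div]
  congr 1
  simp only [sub_re, pOmega_re, one_div, one_re, ofReal_re, mul_re, neg_mul, pOmega_im, ofReal_im,
    mul_zero, sub_zero, sub_neg_eq_add, sub_im, one_im, mul_im, zero_add, zero_sub, mul_neg]
  linear_combination -(v / 4) * h3

def pD1Kernel (u v : ℝ) : ℝ := u * v * (u + v) / (u ^ 3 - v ^ 3)

lemma pD1Kernel_swap (u v : ℝ) : pD1Kernel v u = -pD1Kernel u v := by
  rw [pD1Kernel, pD1Kernel, ← neg_sub, div_neg]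
  ring

lemma im_pD1_diag (c x : ℝ) :
    ((pOmega - 5) * (c * I) / (6 * (pOmega - 1) * x)).im = c / (2 * x) := by
  have h : (pOmega - 5) * (c * I) / (6 * (pOmega - 1) * x)
      = ((c / (6 * x) : ℝ) * ((pOmega - 5) / (pOmega - 1))) * I := by
    push_cast; simp only [div_eq_mul_inv, mul_inv]; ring
  rw [h, mul_I_im, re_ofReal_mul, re_pOmega_sub_five_div]
  ring

lemma mul_im_pD1_offDiag {a u : ℝ} (ha : a ≠ 0) (v c : ℝ) :
    a * u * (2 * (pOmega - 1) * (v : ℂ) * (c * I)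
      / (3 * (a : ℂ) * ((u : ℂ) - (v : ℂ)) * ((u : ℂ) - pOmega * (v : ℂ)))).im
      = -(c * pD1Kernel u v) := by
  have h : 2 * (pOmega - 1) * (v : ℂ) * (c * I)
        / (3 * (a : ℂ) * ((u : ℂ) - (v : ℂ)) * ((u : ℂ) - pOmega * (v : ℂ)))
      = ((2 * c * v / (3 * a * (u - v)) : ℝ) * ((pOmega - 1) / (u - pOmega * v))) * I := by
    push_cast; simp only [div_eq_mul_inv, mul_inv]; ring
  rw [h, mul_I_im, re_ofReal_mul, re_pOmega_sub_one_div, pD1Kernel,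
    show u ^ 3 - v ^ 3 = (u - v) * (u ^ 2 + u * v + v ^ 2) by ring]
  field_simp

lemma mul_im_pD1 {m : ℕ} (x b : Fin m → ℝ) (j : Fin m) (hxj : 0 < x j) :
    x j * (pD1 x (fun k => b k * I) j).im
      = b j / 2 - ∑ k ∈ univ.filter (· ≠ j),
          b k * pD1Kernel (x j ^ ((2 : ℝ) / 3)) (x k ^ ((2 : ℝ) / 3)) := by
  have hx : x j = x j ^ ((1 : ℝ) / 3) * x j ^ ((2 : ℝ) / 3) := by
    rw [← rpow_add hxj]; norm_num
  have ha : x j ^ ((1 : ℝ) / 3) ≠ 0 := (rpow_pos_of_pos hxj _).ne'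
  rw [pD1, add_im, im_sum, mul_add, mul_sum, im_pD1_diag, sub_eq_add_neg (b j / 2),
    ← sum_neg_distrib]
  congr 1
  · field_simp
  · nth_rewrite 1 [hx]
    simp only [mul_im_pD1_offDiag ha]

theorem pearcey_d1_imaginary_part_sum_general
    (m : ℕ) (x : Fin m → ℝ)
    (hxpos : ∀ j, 0 < x j)
    (β : Fin m → ℂ) (hβ : ∀ j, (β j).re = 0) :
    (∑ j, 2 * Complex.I * β j * (x j : ℂ) * ((pD1 x β j).im : ℂ)) = ∑ j, β j ^ 2 := by
  obtain ⟨b, rfl⟩ : ∃ b : Fin m → ℝ, β = fun j => (b j : ℂ) * I :=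
    ⟨fun j => (β j).im, funext fun j => Complex.ext (by simp [hβ j]) (by simp)⟩
  set S : Fin m → ℝ := fun j => ∑ k ∈ univ.filter (· ≠ j),
    b k * pD1Kernel (x j ^ ((2 : ℝ) / 3)) (x k ^ ((2 : ℝ) / 3))
  have him (j : Fin m) : x j * (pD1 x (fun k => b k * I) j).im = b j / 2 - S j :=
    mul_im_pD1 x b j (hxpos j)
  have hcross : ∑ j, b j * S j = 0 := by
    simp only [S, mul_sum]
    exact sum_sum_filter_ne_eq_zero_of_antisymm _ fun j k => by rw [pD1Kernel_swap]; ring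
  have hlhs (r s t : ℝ) : 2 * I * (r * I) * s * t = ((-2 * r * (s * t) : ℝ) : ℂ) := by
    push_cast; linear_combination 2 * r * s * t * I_sq
  have hrhs (r : ℝ) : ((r : ℂ) * I) ^ 2 = ((-r ^ 2 : ℝ) : ℂ) := by
    push_cast; linear_combination (r : ℂ) ^ 2 * I_sq
  simp only [hlhs, hrhs, ← ofReal_sum, ofReal_inj, him]
  calc ∑ j, -2 * b j * (b j / 2 - S j) = ∑ j, (-b j ^ 2 + 2 * (b j * S j)) :=
        sum_congr rfl fun j _ => by ring
    _ = ∑ j, -b j ^ 2 := by rw [sum_add_distrib, ← mul_sum, hcross, mul_zero, add_zero]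

theorem pearcey_d1_imaginary_part_sum
    (m : ℕ) (hm : 1 ≤ m) (x : Fin m → ℝ)
    (hxpos : ∀ j, 0 < x j) (hxmono : StrictMono x)
    (β : Fin m → ℂ) (hβ : ∀ j, (β j).re = 0) :
    (∑ j, 2 * Complex.I * β j * (x j : ℂ) * ((pD1 x β j).im : ℂ)) = ∑ j, β j ^ 2 :=
  pearcey_d1_imaginary_part_sum_general m x hxpos β hβ
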